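/- arXiv:1904.01117 — 3 statements merged into one kernel-verified Lean document; each statement's English description precedes it below -/
import Mathlib

section
/- For every expectation f and every initial state s ∈ Σ, the weakest preexpectation of the loop equals the expected value of the stopped process: (lfp Φ_f)(s) = ∫_Ω X_τ^f dP_s. (No termination assumption on the loop is needed.) -/
open MeasureTheory Filter Topology
open scoped Classical ENNReal ENat NNReal

/-! Loop model: states `S`, guard `φ : Set S`, loop-body transition probabilities
`μ : S → S → ℝ≥0`. Expectations are functions `S → ℝ≥0∞` with the pointwise order. -/

variable {S : Type*}

/-- One-step weakest preexpectation of the loop body: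
`wpF μ X s = ∑_{s'} μ s s' * X s'`. -/
noncomputable def wpF (μ : S → S → ℝ≥0) (X : S → ℝ≥0∞) (s : S) : ℝ≥0∞ :=
  ∑' s', (μ s s' : ℝ≥0∞) * X s'

/-- The characteristic function `Φ_f` of the loop `while φ do C` with respect to the
postexpectation `f`. -/
noncomputable def Phi (φ : Set S) (μ : S → S → ℝ≥0) (f : S → ℝ≥0∞)
    (X : S → ℝ≥0∞) (s : S) : ℝ≥0∞ :=
  if s ∈ φ then wpF μ X s else f s

theorem Phi_mono (φ : Set S) (μ : S → S → ℝ≥0) (f : S → ℝ≥0∞) :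
    Monotone (Phi φ μ f) := by
  intro X Y h s
  unfold Phi wpF
  split_ifs with hs
  · exact ENNReal.tsum_le_tsum fun s' => mul_le_mul_right (h s') _
  · exact le_rfl

/-- Least fixed point of the characteristic function `Φ_f`,
i.e. the weakest preexpectation `wp(while φ do C)(f)`. -/
noncomputable def lfpPhi (φ : Set S) (μ : S → S → ℝ≥0) (f : S → ℝ≥0∞) : S → ℝ≥0∞ :=
  OrderHom.lfp ⟨Phi φ μ f, Phi_mono φ μ f⟩

/-- A finite expectation: `X s < ∞` for all states. -/
def FinExp (X : S → ℝ≥0∞) : Prop := ∀ s, X s < ⊤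

/-- A bounded expectation: `X s ≤ c` for some constant `c : ℝ≥0`. -/
def BddExp (X : S → ℝ≥0∞) : Prop := ∃ c : ℝ≥0, ∀ s, X s ≤ (c : ℝ≥0∞)

/-- `I` harmonizes with `f` if `I` agrees with `f` on all terminal states (states
outside the guard). -/
def Harmonizes (φ : Set S) (I f : S → ℝ≥0∞) : Prop := ∀ s ∉ φ, I s = f s

/-- `ΔI`: the expected change of `I` within one loop iteration. -/
noncomputable def dExp (φ : Set S) (μ : S → S → ℝ≥0) (I : S → ℝ≥0∞) (s : S) : ℝ≥0∞ :=
  if s ∈ φ then ∑' s', (μ s s' : ℝ≥0∞) * ((I s' - I s) ⊔ (I s - I s')) else 0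

/-- `I` is conditionally difference bounded if `ΔI` is bounded by a constant. -/
def CondDiffBdd (φ : Set S) (μ : S → S → ℝ≥0) (I : S → ℝ≥0∞) : Prop :=
  ∃ c : ℝ≥0, ∀ s, dExp φ μ I s ≤ (c : ℝ≥0∞)

/-! The loop space `Ω := ℕ → S` with its product σ-algebra (`S` discrete). -/

/-- The cylinder set of a finite sequence of states. -/
def Cyl (π : List S) : Set (ℕ → S) := {ϑ | ∀ i : Fin π.length, ϑ i = π.get i}

/-- The σ-algebra `F_n`, generated by the cylinder sets of sequences of length `n+1`. -/
def Fn (n : ℕ) : MeasurableSpace (ℕ → S) :=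
  MeasurableSpace.generateFrom {A | ∃ π : List S, π.length = n + 1 ∧ A = Cyl π}

/-- The shifted filtration `G_n := F_{n+1}`. -/
def Gn (n : ℕ) : MeasurableSpace (ℕ → S) := Fn (n + 1)

/-- One-step transition probability of the loop: from a state `a` inside the guard move
according to `μ`; a state outside the guard is absorbing. -/
noncomputable def stepP (φ : Set S) (μ : S → S → ℝ≥0) (a b : S) : ℝ≥0 :=
  if a ∈ φ then μ a b else if b = a then 1 else 0

/-- Product of the one-step transition probabilities along a finite sequence. -/
noncomputable def chainP (φ : Set S) (μ : S → S → ℝ≥0) : List S → ℝ≥0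
  | [] => 1
  | [_] => 1
  | a :: b :: rest => stepP φ μ a b * chainP φ μ (b :: rest)

/-- The prefix probability `p_s(π)` of the finite sequence `π` of states, starting the
loop in the state `s`. -/
noncomputable def prefP (φ : Set S) (μ : S → S → ℝ≥0) (s : S) (π : List S) : ℝ≥0 :=
  (if π.head? = some s then 1 else 0) * chainP φ μ π

/-- The looping time `τ`: the first time the run leaves the guard. -/
noncomputable def loopT (φ : Set S) (ϑ : ℕ → S) : ℕ∞ :=
  sInf {n : ℕ∞ | ∃ m : ℕ, n = (m : ℕ∞) ∧ ϑ m ∉ φ}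

/-- The stochastic process `X_n^{f,I}` induced by the invariant `I` (w.r.t. the
postexpectation `f`). -/
noncomputable def Xn (φ : Set S) (f I : S → ℝ≥0∞) (n : ℕ) (ϑ : ℕ → S) : ℝ≥0∞ :=
  if loopT φ ϑ ≤ (n : ℕ∞) then f (ϑ (loopT φ ϑ).toNat) else I (ϑ (n + 1))

/-- The stopped process `X_τ^f`. -/
noncomputable def Xstop (φ : Set S) (f : S → ℝ≥0∞) (ϑ : ℕ → S) : ℝ≥0∞ :=
  if loopT φ ϑ < ⊤ then f (ϑ (loopT φ ϑ).toNat) else 0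

/-! By Kleene's theorem `lfp Φ_f = ⨆ₙ Φ_fⁿ(0)`, since `Φ_f` preserves suprema of chains. Unrolling
`Φ_f^{n+1}(0)(s)` gives a sum over runs `s s₁ … sₙ`, weighted by their prefix probabilities, of
`f` at the first state outside the guard (`0` if there is none). That sum is the `P_s`-integral of
the truncation of `X_τ^f` to `{τ ≤ n}`, and these truncations increase to `X_τ^f`, so monotone
convergence finishes the proof. -/

theorem tsum_iSup_of_monotone {α : Type*} {F : α → ℕ → ℝ≥0∞} (hF : ∀ a, Monotone (F a)) :
    ∑' a, ⨆ n, F a n = ⨆ n, ∑' a, F a n := by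
  simp_rw [ENNReal.tsum_eq_iSup_sum, ENNReal.finsetSum_iSup_of_monotone hF]
  exact iSup_comm

theorem tsum_fin_cons {α : Type*} {n : ℕ} (F : (Fin (n + 1) → α) → ℝ≥0∞) :
    ∑' v, F v = ∑' (b : α) (u : Fin n → α), F (Fin.cons b u) := by
  rw [← (Fin.consEquiv fun _ => α).tsum_eq F, ← ENNReal.tsum_prod]
  rfl

section Kleene

variable (φ : Set S) (μ : S → S → ℝ≥0) (f : S → ℝ≥0∞)

theorem Phi_iSup {X : ℕ → S → ℝ≥0∞} (hX : Monotone X) :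
    Phi φ μ f (⨆ n, X n) = ⨆ n, Phi φ μ f (X n) := by
  ext s
  simp only [Phi, wpF, iSup_apply]
  split_ifs
  · simp_rw [ENNReal.mul_iSup]
    exact tsum_iSup_of_monotone fun s' _ _ h => by gcongr; exact hX h s'
  · exact iSup_const.symm

theorem ωScottContinuous_Phi : OmegaCompletePartialOrder.ωScottContinuous (Phi φ μ f) := by
  refine .of_monotone_map_ωSup ⟨Phi_mono φ μ f, fun c => ?_⟩
  rw [← OmegaCompletePartialOrder.ωSup_eq_of_isLUB isLUB_iSup,
    ← OmegaCompletePartialOrder.ωSup_eq_of_isLUB isLUB_iSup]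
  exact Phi_iSup φ μ f c.monotone

theorem lfpPhi_eq_iSup_iterate : lfpPhi φ μ f = ⨆ n, (Phi φ μ f)^[n] ⊥ :=
  fixedPoints.lfp_eq_sSup_iterate _ (ωScottContinuous_Phi φ μ f)

end Kleene

section LoopingTime

variable {φ : Set S} {ϑ : ℕ → S}

theorem loopT_eq_coe {m : ℕ} (hin : ∀ k < m, ϑ k ∈ φ) (hout : ϑ m ∉ φ) :
    loopT φ ϑ = m := by
  refine le_antisymm (sInf_le ⟨m, rfl, hout⟩) (le_sInf ?_)
  rintro _ ⟨k, rfl, hk⟩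
  exact Nat.cast_le.mpr (not_lt.1 fun hlt => hk (hin k hlt))

theorem loopT_eq_top (h : ∀ k, ϑ k ∈ φ) : loopT φ ϑ = ⊤ :=
  sInf_eq_top.mpr fun _ ⟨k, _, hk⟩ => absurd (h k) hk

end LoopingTime

noncomputable def exitValue (φ : Set S) (f : S → ℝ≥0∞) : (n : ℕ) → (Fin (n + 1) → S) → ℝ≥0∞
  | 0, v => if v 0 ∈ φ then 0 else f (v 0)
  | n + 1, v => if v 0 ∈ φ then exitValue φ f n (Fin.tail v) else f (v 0)

section ExitValue

variable {φ : Set S} (f : S → ℝ≥0∞)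

theorem exitValue_cons {n : ℕ} (s : S) (u : Fin (n + 1) → S) :
    exitValue φ f (n + 1) (Fin.cons s u) = if s ∈ φ then exitValue φ f n u else f s := by
  rw [exitValue, Fin.cons_zero, Fin.tail_cons]

theorem exitValue_prefix_of_exit {ϑ : ℕ → S} {m : ℕ} (hin : ∀ k < m, ϑ k ∈ φ) (hout : ϑ m ∉ φ)
    (n : ℕ) : exitValue φ f n (fun i => ϑ i) = if m ≤ n then f (ϑ m) else 0 := by
  induction n generalizing ϑ m with
  | zero =>
    cases m with
    | zero => simp [exitValue, hout]
    | succ m => simp [exitValue, hin 0 (by omega)]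
  | succ n ih =>
    cases m with
    | zero => simp [exitValue, hout]
    | succ m =>
      rw [exitValue, if_pos (by exact hin 0 (by omega))]
      exact (ih (ϑ := fun k => ϑ (k + 1)) (fun k hk => hin (k + 1) (by omega)) hout).trans
        (by simp)

theorem exitValue_prefix_of_forall_mem {ϑ : ℕ → S} (h : ∀ k, ϑ k ∈ φ) (n : ℕ) :
    exitValue φ f n (fun i => ϑ i) = 0 := by
  induction n generalizing ϑ with
  | zero => simp [exitValue, h 0]
  | succ n ih =>
    rw [exitValue, if_pos (by exact h 0)]
    exact ih (ϑ := fun k => ϑ (k + 1)) fun k => h (k + 1)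

theorem exitValue_prefix (ϑ : ℕ → S) (n : ℕ) :
    exitValue φ f n (fun i => ϑ i) =
      if loopT φ ϑ ≤ n then f (ϑ (loopT φ ϑ).toNat) else 0 := by
  by_cases h : ∀ k, ϑ k ∈ φ
  · simp [exitValue_prefix_of_forall_mem f h, loopT_eq_top h]
  · push Not at h
    have hin : ∀ k < Nat.find h, ϑ k ∈ φ := fun k hk => not_not.1 (Nat.find_min h hk)
    simp [exitValue_prefix_of_exit f hin (Nat.find_spec h), loopT_eq_coe hin (Nat.find_spec h)]

theorem monotone_exitValue_prefix :
    Monotone fun n (ϑ : ℕ → S) => exitValue φ f n (fun i => ϑ i) := by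
  intro n m hnm ϑ
  simp only [exitValue_prefix]
  split_ifs with hn hm
  · exact le_rfl
  · exact absurd (hn.trans (Nat.cast_le.mpr hnm)) hm
  · exact zero_le
  · exact le_rfl

theorem iSup_exitValue_prefix (ϑ : ℕ → S) :
    ⨆ n, exitValue φ f n (fun i => ϑ i) = Xstop φ f ϑ := by
  simp only [exitValue_prefix, Xstop]
  induction loopT φ ϑ using ENat.recTopCoe with
  | top => simp
  | coe m =>
    simp only [Nat.cast_le, ENat.natCast_lt_top, if_true, ENat.toNat_natCast]
    exact le_antisymm (iSup_le fun n => by split_ifs <;> simp) (le_iSup_of_le m (by simp))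

end ExitValue

section PathSums

variable (φ : Set S) (μ : S → S → ℝ≥0)

theorem chainP_cons_cons (a b : S) (l : List S) :
    chainP φ μ (a :: b :: l) = stepP φ μ a b * chainP φ μ (b :: l) := rfl

theorem tsum_chainP_of_notMem {s : S} (hs : s ∉ φ) (n : ℕ) :
    ∑' u : Fin n → S, (chainP φ μ (s :: List.ofFn u) : ℝ≥0∞) = 1 := by
  induction n with
  | zero => simp [chainP]
  | succ n ih =>
    rw [tsum_fin_cons, tsum_eq_single s]
    · simp [chainP_cons_cons, stepP, hs, ih]
    · intro b hb
      simp [chainP_cons_cons, stepP, hs, hb]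

theorem tsum_mul_prefP_ofFn (s : S) {n : ℕ} (F : (Fin (n + 1) → S) → ℝ≥0∞) :
    ∑' v, F v * prefP φ μ s (List.ofFn v) =
      ∑' u : Fin n → S, F (Fin.cons s u) * chainP φ μ (s :: List.ofFn u) := by
  rw [tsum_fin_cons, tsum_eq_single s]
  · simp [prefP]
  · intro b hb
    simp [prefP, hb]

variable (f : S → ℝ≥0∞)

noncomputable def unrolledWp (n : ℕ) (s : S) : ℝ≥0∞ :=
  ∑' u : Fin n → S, exitValue φ f n (Fin.cons s u) * chainP φ μ (s :: List.ofFn u)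

theorem unrolledWp_zero : unrolledWp φ μ f 0 = Phi φ μ f ⊥ := by
  ext s
  simp [unrolledWp, exitValue, chainP, Phi, wpF]

theorem unrolledWp_succ (n : ℕ) :
    unrolledWp φ μ f (n + 1) = Phi φ μ f (unrolledWp φ μ f n) := by
  ext s
  by_cases hs : s ∈ φ
  · rw [Phi, if_pos hs, wpF, unrolledWp, tsum_fin_cons]
    refine tsum_congr fun b => ?_
    simp only [unrolledWp, exitValue_cons, if_pos hs, List.ofFn_cons, chainP_cons_cons, stepP,
      ← ENNReal.tsum_mul_left, ENNReal.coe_mul]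
    exact tsum_congr fun w => by ring
  · simp only [unrolledWp, Phi, if_neg hs, exitValue_cons, ENNReal.tsum_mul_left,
      tsum_chainP_of_notMem φ μ hs, mul_one]

theorem unrolledWp_eq_iterate (n : ℕ) : unrolledWp φ μ f n = (Phi φ μ f)^[n + 1] ⊥ := by
  induction n with
  | zero => exact unrolledWp_zero φ μ f
  | succ n ih => rw [unrolledWp_succ, ih, Function.iterate_succ_apply' _ (n + 1)]

theorem lfpPhi_eq_iSup_unrolledWp : lfpPhi φ μ f = ⨆ n, unrolledWp φ μ f n := by
  rw [lfpPhi_eq_iSup_iterate, ← sup_iSup_nat_succ]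
  simp [unrolledWp_eq_iterate]

end PathSums

theorem prefix_preimage_singleton {n : ℕ} (v : Fin (n + 1) → S) :
    (fun (ϑ : ℕ → S) (i : Fin (n + 1)) => ϑ i) ⁻¹' {v} = Cyl (List.ofFn v) := by
  ext ϑ
  simp only [Set.mem_preimage, Set.mem_singleton_iff, funext_iff, Cyl, Set.mem_ofPred_eq,
    List.get_ofFn]
  constructor
  · intro H i
    simpa using H (Fin.cast List.length_ofFn i)
  · intro H i
    simpa using H (Fin.cast List.length_ofFn.symm i)

section LoopSpace

variable [MeasurableSpace S]

theorem measurable_prefix (n : ℕ) : Measurable fun (ϑ : ℕ → S) (i : Fin (n + 1)) => ϑ i := by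
  fun_prop

theorem lintegral_comp_prefix [Countable S] [MeasurableSingletonClass S] (P : Measure (ℕ → S))
    {n : ℕ} (g : (Fin (n + 1) → S) → ℝ≥0∞) :
    ∫⁻ ϑ, g (fun i => ϑ i) ∂P = ∑' v, g v * P (Cyl (List.ofFn v)) := by
  rw [← lintegral_map (measurable_of_countable g) (measurable_prefix n), lintegral_countable']
  simp_rw [Measure.map_apply (measurable_prefix n) (measurableSet_singleton _),
    prefix_preimage_singleton]

end LoopSpace

theorem lintegral_exitValue_prefix [Countable S] [MeasurableSpace S] [MeasurableSingletonClass S]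
    {φ : Set S} {μ : S → S → ℝ≥0} {P : Measure (ℕ → S)} {s : S}
    (hP : ∀ π : List S, π ≠ [] → P (Cyl π) = prefP φ μ s π) (f : S → ℝ≥0∞) (n : ℕ) :
    ∫⁻ ϑ, exitValue φ f n (fun i => ϑ i) ∂P = unrolledWp φ μ f n s := by
  rw [lintegral_comp_prefix, unrolledWp, ← tsum_mul_prefP_ofFn]
  exact tsum_congr fun v => by rw [hP _ (mt List.ofFn_eq_nil_iff.1 (Nat.succ_ne_zero n))]

theorem lfp_eq_lintegral_Xstop_general {S : Type*} [Countable S] [MeasurableSpace S] [DiscreteMeasurableSpace S]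
    (φ : Set S) (μ : S → S → ℝ≥0)
    (P : S → Measure (ℕ → S))
    (hPC : ∀ (s : S) (π : List S), π ≠ [] → P s (Cyl π) = (prefP φ μ s π : ℝ≥0∞))
    (f : S → ℝ≥0∞) (s : S) :
    lfpPhi φ μ f s = ∫⁻ ϑ, Xstop φ f ϑ ∂(P s) := by
  have hmeas (n : ℕ) : Measurable fun ϑ : ℕ → S => exitValue φ f n (fun i => ϑ i) :=
    (measurable_of_countable _).comp (measurable_prefix n)
  calc lfpPhi φ μ f s
      = ⨆ n, ∫⁻ ϑ, exitValue φ f n (fun i => ϑ i) ∂(P s) := by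
        simp_rw [lfpPhi_eq_iSup_unrolledWp, iSup_apply, lintegral_exitValue_prefix (hPC s)]
    _ = ∫⁻ ϑ, Xstop φ f ϑ ∂(P s) := by
        rw [← lintegral_iSup hmeas (monotone_exitValue_prefix f)]
        simp_rw [iSup_exitValue_prefix]

/-- **The weakest preexpectation is the expected value of the stopped process:**
`(lfp Φ_f)(s) = E_s[X_τ^f]`, with no termination assumption on the loop. -/
theorem lfp_eq_lintegral_Xstop {S : Type*} [Countable S] [MeasurableSpace S] [DiscreteMeasurableSpace S]
    (φ : Set S) (μ : S → S → ℝ≥0) (hμ : ∀ s, ∑' s', μ s s' = 1)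
    (P : S → Measure (ℕ → S)) (hP : ∀ s, IsProbabilityMeasure (P s))
    (hPC : ∀ (s : S) (π : List S), π ≠ [] → P s (Cyl π) = (prefP φ μ s π : ℝ≥0∞))
    (f : S → ℝ≥0∞) (s : S) :
    lfpPhi φ μ f s = ∫⁻ ϑ, Xstop φ f ϑ ∂(P s) :=
  lfp_eq_lintegral_Xstop_general φ μ P hPC f s
end

section
/- Let I be a finite expectation that harmonizes with f. Then for every n ∈ ℕ and every initial state s ∈ Σ, the G_n-measurable function X_n^{0,ΔI} (the process induced by the pair of expectations 0 and ΔI) is a version of the conditional expectation of |X_{n+1}^{f,I} − X_n^{f,I}| given G_n under P_s; that is, for every G ∈ G_n, ∫_G |X_{n+1}^{f,I} − X_n^{f,I}| dP_s = ∫_G X_n^{0,ΔI} dP_s. -/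
open MeasureTheory Filter Topology
open scoped Classical ENNReal ENat NNReal

/-! Loop model: states `S`, guard `φ : Set S`, loop-body transition probabilities
`μ : S → S → ℝ≥0`. Expectations are functions `S → ℝ≥0∞` with the pointwise order. -/

variable {S : Type*}

/-! The σ-algebra `G_n` is generated by the map `ϑ ↦ (ϑ 0, …, ϑ (n+1))`, whose fibres are the
cylinders of length `n + 2`, and `X_n^{0,ΔI}` factors through this map; so it suffices to compare
the two integrals over one such cylinder `Cyl(s_0 … s_{n+1})`. If some `s_i` lies outside the guard,
both integrands vanish on it: harmonization gives `X_n^{f,I} = X_{n+1}^{f,I} = f(ϑ(τ))`.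
Otherwise the left integrand is `|I(ϑ(n+2)) − I(s_{n+1})|`, and splitting the cylinder according
to the next state `b`, of probability `p_s(s_0 … s_{n+1}) · μ(s_{n+1})(b)`, turns its integral
into `ΔI(s_{n+1}) · p_s(s_0 … s_{n+1})`. -/

theorem setLIntegral_comp_eval_eq_tsum {ι α : Type*} [MeasurableSpace α] [Countable α]
    [MeasurableSingletonClass α] (P : Measure (ι → α)) (A : Set (ι → α)) (i : ι) (g : α → ℝ≥0∞) :
    ∫⁻ x in A, g (x i) ∂P = ∑' a, g a * P (A ∩ {x | x i = a}) := by
  rw [← lintegral_map (measurable_of_countable g) (measurable_pi_apply i), lintegral_countable']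
  refine tsum_congr fun a => ?_
  rw [Measure.map_apply (measurable_pi_apply i) (measurableSet_singleton a),
    Measure.restrict_apply (measurable_pi_apply i (measurableSet_singleton a)), Set.inter_comm]
  rfl

theorem setLIntegral_preimage_congr {Ω β : Type*} [MeasurableSpace Ω] [MeasurableSpace β]
    [Countable β] [MeasurableSingletonClass β] {r : Ω → β} (hr : Measurable r) {P : Measure Ω}
    {g h : Ω → ℝ≥0∞} (hfiber : ∀ v, ∫⁻ x in r ⁻¹' {v}, g x ∂P = ∫⁻ x in r ⁻¹' {v}, h x ∂P)
    (A : Set β) : ∫⁻ x in r ⁻¹' A, g x ∂P = ∫⁻ x in r ⁻¹' A, h x ∂P := by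
  have hdisj : A.PairwiseDisjoint fun v => r ⁻¹' {v} :=
    fun v _ w _ hvw => Set.disjoint_singleton.2 hvw |>.preimage r
  rw [← Set.biUnion_preimage_singleton,
    lintegral_biUnion A.to_countable (fun v _ => hr (measurableSet_singleton v)) hdisj,
    lintegral_biUnion A.to_countable (fun v _ => hr (measurableSet_singleton v)) hdisj]
  exact tsum_congr fun v => hfiber v

section LoopSpace

variable {φ : Set S} {μ : S → S → ℝ≥0}

def runPrefix (m : ℕ) (ϑ : ℕ → S) : Fin m → S := fun i => ϑ i

theorem cyl_ofFn {m : ℕ} (v : Fin m → S) : Cyl (List.ofFn v) = runPrefix m ⁻¹' {v} := by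
  ext ϑ
  simp [Cyl, runPrefix, funext_iff, Fin.forall_iff]

theorem runPrefix_preimage_inter_eval {m : ℕ} (v : Fin m → S) (b : S) :
    runPrefix m ⁻¹' {v} ∩ {ϑ | ϑ m = b} = runPrefix (m + 1) ⁻¹' {Fin.snoc v b} := by
  ext ϑ
  simp [runPrefix, funext_iff, Fin.forall_fin_succ', Fin.snoc_castSucc, Fin.snoc_last]

theorem measurable_runPrefix [MeasurableSpace S] (m : ℕ) :
    Measurable (runPrefix m : (ℕ → S) → Fin m → S) :=
  measurable_pi_lambda _ fun i => measurable_pi_apply (i : ℕ)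

theorem Fn_eq_comap_runPrefix [Countable S] (n : ℕ) :
    (Fn n : MeasurableSpace (ℕ → S)) = MeasurableSpace.comap (runPrefix (n + 1)) ⊤ := by
  apply le_antisymm
  · refine MeasurableSpace.generateFrom_le ?_
    rintro _ ⟨π, hπ, rfl⟩
    obtain ⟨v, rfl⟩ : ∃ v : Fin (n + 1) → S, π = List.ofFn v :=
      ⟨fun i => π[i], List.ext_getElem (by simp [hπ]) fun i _ _ => by
        simp only [List.getElem_ofFn]; rfl⟩
    exact ⟨{v}, trivial, (cyl_ofFn v).symm⟩
  · rintro _ ⟨A, -, rfl⟩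
    rw [← Set.biUnion_preimage_singleton]
    exact MeasurableSet.biUnion A.to_countable fun v _ =>
      MeasurableSpace.measurableSet_generateFrom ⟨List.ofFn v, by simp, (cyl_ofFn v).symm⟩

theorem loopT_le_iff {ϑ : ℕ → S} {k : ℕ} : loopT φ ϑ ≤ k ↔ ∃ m ≤ k, ϑ m ∉ φ := by
  constructor
  · intro h
    rcases Set.eq_empty_or_nonempty {n : ℕ∞ | ∃ m : ℕ, n = (m : ℕ∞) ∧ ϑ m ∉ φ} with he | hne
    · rw [loopT, he, sInf_empty] at h
      exact absurd h (by simp)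
    · obtain ⟨m, hm, hmφ⟩ := csInf_mem hne
      rw [loopT, hm] at h
      exact ⟨m, by exact_mod_cast h, hmφ⟩
  · rintro ⟨m, hm, hmφ⟩
    exact le_trans (sInf_le ⟨m, rfl, hmφ⟩) (by exact_mod_cast hm)

theorem loopT_le_iff_runPrefix {ϑ : ℕ → S} {k : ℕ} :
    loopT φ ϑ ≤ k ↔ ∃ i, runPrefix (k + 1) ϑ i ∉ φ := by
  simp [loopT_le_iff, runPrefix, Fin.exists_iff]

theorem Xn_eq_of_harmonizes {f I : S → ℝ≥0∞} (h : Harmonizes φ I f) (n : ℕ) (ϑ : ℕ → S) :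
    Xn φ f I n ϑ =
      if loopT φ ϑ ≤ (n + 1 : ℕ) then f (ϑ (loopT φ ϑ).toNat) else I (ϑ (n + 1)) := by
  unfold Xn
  by_cases h1 : loopT φ ϑ ≤ n
  · rw [if_pos h1, if_pos (h1.trans (by simp))]
  by_cases h2 : loopT φ ϑ ≤ (n + 1 : ℕ)
  · have hexit : ϑ (n + 1) ∉ φ := by
      obtain ⟨m, hm, hmφ⟩ := loopT_le_iff.1 h2
      obtain rfl : m = n + 1 :=
        le_antisymm hm (not_le.1 fun hmn => h1 (loopT_le_iff.2 ⟨m, hmn, hmφ⟩))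
      exact hmφ
    have hτ : loopT φ ϑ = (n + 1 : ℕ) :=
      le_antisymm h2 (by simpa using Order.add_one_le_of_lt (not_le.1 h1))
    rw [if_neg h1, if_pos h2, hτ, ENat.toNat_natCast, h _ hexit]
  · rw [if_neg h1, if_neg h2]

theorem absDiff_Xn_succ {f I : S → ℝ≥0∞} (h : Harmonizes φ I f) (n : ℕ) (ϑ : ℕ → S) :
    (Xn φ f I (n + 1) ϑ - Xn φ f I n ϑ) ⊔ (Xn φ f I n ϑ - Xn φ f I (n + 1) ϑ) =
      if loopT φ ϑ ≤ (n + 1 : ℕ) then 0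
      else (I (ϑ (n + 2)) - I (ϑ (n + 1))) ⊔ (I (ϑ (n + 1)) - I (ϑ (n + 2))) := by
  rw [Xn_eq_of_harmonizes h n, Xn]
  split_ifs <;> simp

theorem Xn_zero_eq_comp_runPrefix {J : S → ℝ≥0∞} (h : Harmonizes φ J fun _ => 0) (n : ℕ) :
    Xn φ (fun _ => 0) J n =
      (fun v : Fin (n + 2) → S => if ∃ i, v i ∉ φ then 0 else J (v (Fin.last (n + 1)))) ∘
        runPrefix (n + 2) := by
  funext ϑ
  rw [Xn_eq_of_harmonizes h]
  exact if_congr loopT_le_iff_runPrefix rfl rfl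

theorem dExp_harmonizes_zero (I : S → ℝ≥0∞) : Harmonizes φ (dExp φ μ I) fun _ => 0 :=
  fun _ hs => if_neg hs

theorem chainP_append_singleton (l : List S) (hl : l ≠ []) (b : S) :
    chainP φ μ (l ++ [b]) = chainP φ μ l * stepP φ μ (l.getLast hl) b := by
  induction l with
  | nil => contradiction
  | cons a l ih =>
    cases l with
    | nil => simp [chainP]
    | cons c l =>
      simp only [List.cons_append, chainP] at ih ⊢
      rw [ih (List.cons_ne_nil c l), List.getLast_cons (List.cons_ne_nil c l), mul_assoc]

theorem prefP_append_singleton (s : S) (l : List S) (hl : l ≠ []) (b : S) :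
    prefP φ μ s (l ++ [b]) = prefP φ μ s l * stepP φ μ (l.getLast hl) b := by
  rw [prefP, prefP, chainP_append_singleton l hl, List.head?_append_of_ne_nil _ hl, mul_assoc]

theorem measure_runPrefix_snoc [MeasurableSpace S] {s : S} {P : Measure (ℕ → S)}
    (hPC : ∀ π : List S, π ≠ [] → P (Cyl π) = prefP φ μ s π) {m : ℕ} (v : Fin (m + 1) → S)
    (b : S) :
    P (runPrefix (m + 2) ⁻¹' {Fin.snoc v b}) =
      P (runPrefix (m + 1) ⁻¹' {v}) * stepP φ μ (v (Fin.last m)) b := by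
  have hsnoc : List.ofFn (Fin.snoc v b) = List.ofFn v ++ [b] := by
    rw [List.ofFn_succ', List.concat_eq_append]
    simp only [Fin.snoc_castSucc, Fin.snoc_last]
  rw [← cyl_ofFn, ← cyl_ofFn, hPC _ (by simp), hPC _ (by simp), hsnoc,
    prefP_append_singleton s _ (by simp), List.getLast_ofFn, ENNReal.coe_mul]
  rfl

theorem setLIntegral_absDiff_Xn_succ_eq_on_fiber [MeasurableSpace S] [Countable S]
    [MeasurableSingletonClass S] {s : S} {P : Measure (ℕ → S)}
    (hPC : ∀ π : List S, π ≠ [] → P (Cyl π) = prefP φ μ s π) {f I : S → ℝ≥0∞}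
    (hharm : Harmonizes φ I f) (n : ℕ) (v : Fin (n + 2) → S) :
    ∫⁻ ϑ in runPrefix (n + 2) ⁻¹' {v},
        (Xn φ f I (n + 1) ϑ - Xn φ f I n ϑ) ⊔ (Xn φ f I n ϑ - Xn φ f I (n + 1) ϑ) ∂P =
      ∫⁻ ϑ in runPrefix (n + 2) ⁻¹' {v}, Xn φ (fun _ => 0) (dExp φ μ I) n ϑ ∂P := by
  have hfiber := measurable_runPrefix (n + 2) (measurableSet_singleton v)
  have hτ : ∀ ϑ ∈ runPrefix (n + 2) ⁻¹' {v}, loopT φ ϑ ≤ (n + 1 : ℕ) ↔ ∃ i, v i ∉ φ :=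
    fun ϑ hϑ => by rw [loopT_le_iff_runPrefix, show runPrefix (n + 2) ϑ = v from hϑ]
  have hRHS : ∀ ϑ ∈ runPrefix (n + 2) ⁻¹' {v}, Xn φ (fun _ => 0) (dExp φ μ I) n ϑ =
      if ∃ i, v i ∉ φ then 0 else dExp φ μ I (v (Fin.last (n + 1))) := fun ϑ hϑ => by
    rw [Xn_zero_eq_comp_runPrefix (dExp_harmonizes_zero I), Function.comp_apply,
      show runPrefix (n + 2) ϑ = v from hϑ]
  by_cases hv : ∃ i, v i ∉ φ
  · have hLHS : ∀ ϑ ∈ runPrefix (n + 2) ⁻¹' {v},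
        (Xn φ f I (n + 1) ϑ - Xn φ f I n ϑ) ⊔ (Xn φ f I n ϑ - Xn φ f I (n + 1) ϑ) = 0 :=
      fun ϑ hϑ => by rw [absDiff_Xn_succ hharm, if_pos ((hτ ϑ hϑ).2 hv)]
    rw [setLIntegral_congr_fun hfiber hLHS,
      setLIntegral_congr_fun hfiber fun ϑ hϑ => (hRHS ϑ hϑ).trans (if_pos hv)]
  set a := v (Fin.last (n + 1))
  have ha : a ∈ φ := not_not.1 fun h => hv ⟨_, h⟩
  calc _ = ∫⁻ ϑ in runPrefix (n + 2) ⁻¹' {v},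
          (fun b => (I b - I a) ⊔ (I a - I b)) (ϑ (n + 2)) ∂P :=
        setLIntegral_congr_fun hfiber fun ϑ hϑ => by
          rw [absDiff_Xn_succ hharm, if_neg ((hτ ϑ hϑ).not.2 hv)]
          rw [show ϑ (n + 1) = a from congrFun (show runPrefix (n + 2) ϑ = v from hϑ) (Fin.last _)]
    _ = ∑' b, ((I b - I a) ⊔ (I a - I b)) * (P (runPrefix (n + 2) ⁻¹' {v}) * μ a b) := by
        refine (setLIntegral_comp_eval_eq_tsum P _ (n + 2) fun b => (I b - I a) ⊔ (I a - I b)).trans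
          (tsum_congr fun b => congrArg _ ?_)
        rw [runPrefix_preimage_inter_eval]
        exact (measure_runPrefix_snoc hPC v b).trans (by rw [stepP, if_pos ha])
    _ = dExp φ μ I a * P (runPrefix (n + 2) ⁻¹' {v}) := by
        rw [dExp, if_pos ha, ← ENNReal.tsum_mul_right]
        exact tsum_congr fun b => by ring
    _ = _ := by
        rw [setLIntegral_congr_fun hfiber fun ϑ hϑ => (hRHS ϑ hϑ).trans (if_neg hv),
          setLIntegral_const]

end LoopSpace

theorem expected_change_of_invariant_general {S : Type*} [Countable S] [MeasurableSpace S] [DiscreteMeasurableSpace S]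
    (φ : Set S) (μ : S → S → ℝ≥0)
    (P : S → Measure (ℕ → S))
    (hPC : ∀ (s : S) (π : List S), π ≠ [] → P s (Cyl π) = (prefP φ μ s π : ℝ≥0∞))
    (f I : S → ℝ≥0∞) (hharm : Harmonizes φ I f) (n : ℕ) (s : S) :
    Measurable[Gn n] (Xn φ (fun _ => 0) (dExp φ μ I) n) ∧
    ∀ G : Set (ℕ → S), MeasurableSet[Gn n] G →
      ∫⁻ ϑ in G,
          ((Xn φ f I (n + 1) ϑ - Xn φ f I n ϑ) ⊔ (Xn φ f I n ϑ - Xn φ f I (n + 1) ϑ))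
        ∂(P s)
      = ∫⁻ ϑ in G, Xn φ (fun _ => 0) (dExp φ μ I) n ϑ ∂(P s) := by
  have hGn : (Gn n : MeasurableSpace (ℕ → S)) = .comap (runPrefix (n + 2)) ⊤ :=
    Fn_eq_comap_runPrefix (n + 1)
  refine ⟨?_, fun G hG => ?_⟩
  · rw [Xn_zero_eq_comp_runPrefix (dExp_harmonizes_zero I), hGn]
    exact measurable_from_top.comp (comap_measurable (runPrefix (n + 2)))
  · rw [hGn] at hG
    obtain ⟨A, -, rfl⟩ := hG
    exact setLIntegral_preimage_congr (measurable_runPrefix (n + 2))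
      (setLIntegral_absDiff_Xn_succ_eq_on_fiber (hPC s) hharm n) A

/-- **Expected change of `I`.** If the finite expectation `I` harmonizes with `f`, then
the `G_n`-measurable function `X_n^{0,ΔI}` is a version of the conditional expectation of
`|X_{n+1}^{f,I} − X_n^{f,I}|` given `G_n` under `P_s`. -/
theorem expected_change_of_invariant {S : Type*} [Countable S] [MeasurableSpace S] [DiscreteMeasurableSpace S]
    (φ : Set S) (μ : S → S → ℝ≥0) (hμ : ∀ s, ∑' s', μ s s' = 1)
    (P : S → Measure (ℕ → S)) (hP : ∀ s, IsProbabilityMeasure (P s))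
    (hPC : ∀ (s : S) (π : List S), π ≠ [] → P s (Cyl π) = (prefP φ μ s π : ℝ≥0∞))
    (f I : S → ℝ≥0∞) (hIfin : FinExp I) (hharm : Harmonizes φ I f) (n : ℕ) (s : S) :
    Measurable[Gn n] (Xn φ (fun _ => 0) (dExp φ μ I) n) ∧
    ∀ G : Set (ℕ → S), MeasurableSet[Gn n] G →
      ∫⁻ ϑ in G,
          ((Xn φ f I (n + 1) ϑ - Xn φ f I n ϑ) ⊔ (Xn φ f I n ϑ - Xn φ f I (n + 1) ϑ))
        ∂(P s)
      = ∫⁻ ϑ in G, Xn φ (fun _ => 0) (dExp φ μ I) n ϑ ∂(P s) :=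
  expected_change_of_invariant_general φ μ P hPC f I hharm n s
end

section
/- Optional Stopping Theorem for weakest preexpectations, case (c): let f and I be bounded expectations (there is c ∈ ℝ≥0 with f(s) ≤ c and I(s) ≤ c for all s) with I ⪯ Φ_f(I) (a subinvariant). If the loop is universally almost surely terminating, i.e., P_s(τ < ∞) = 1 for every s ∈ Σ, then I ⪯ lfp Φ_f. -/
open MeasureTheory Filter Topology
open scoped Classical ENNReal ENat NNReal

/-! Loop model: states `S`, guard `φ : Set S`, loop-body transition probabilities
`μ : S → S → ℝ≥0`. Expectations are functions `S → ℝ≥0∞` with the pointwise order. -/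

variable {S : Type*}

/-!
A subinvariant `I ≤ c` satisfies `I ≤ Φ_f^n(0) + c · Φ_0^n(1)` for every `n`, by induction, because
`Φ_f (X + Y) = Φ_f X + Φ_0 Y`. The first summand lies below `lfp Φ_f`. The second is `c` times the
total prefix probability of the runs from `s` that stay in the guard for `n` steps, so it is at most
`c · P_s(τ ≥ n)`, which tends to `0` when the loop terminates almost surely.
-/

theorem Phi_add (φ : Set S) (μ : S → S → ℝ≥0) (f X Y : S → ℝ≥0∞) :
    Phi φ μ f (X + Y) = Phi φ μ f X + Phi φ μ 0 Y := by
  funext s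
  by_cases hs : s ∈ φ
  · simp only [Phi, wpF, hs, if_true, Pi.add_apply, mul_add]
    exact ENNReal.tsum_add
  · simp [Phi, hs]

theorem Phi_zero_smul (φ : Set S) (μ : S → S → ℝ≥0) (c : ℝ≥0∞) (X : S → ℝ≥0∞) :
    Phi φ μ 0 (c • X) = c • Phi φ μ 0 X := by
  funext s
  by_cases hs : s ∈ φ
  · simp only [Phi, wpF, hs, if_true, Pi.smul_apply, smul_eq_mul, mul_left_comm _ c]
    exact ENNReal.tsum_mul_left
  · simp [Phi, hs]

theorem iterate_Phi_le_lfpPhi (φ : Set S) (μ : S → S → ℝ≥0) (f : S → ℝ≥0∞) (n : ℕ) :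
    (Phi φ μ f)^[n] 0 ≤ lfpPhi φ μ f := by
  induction n with
  | zero => exact fun _ => zero_le
  | succ n ih =>
    rw [Function.iterate_succ_apply']
    exact (Phi_mono φ μ f ih).trans_eq (OrderHom.map_lfp ⟨Phi φ μ f, Phi_mono φ μ f⟩)

theorem le_iterate_Phi_add_smul_iterate_Phi_zero_one (φ : Set S) (μ : S → S → ℝ≥0)
    {f I : S → ℝ≥0∞} {c : ℝ≥0∞} (hIc : I ≤ fun _ => c) (hsub : I ≤ Phi φ μ f I) (n : ℕ) :
    I ≤ (Phi φ μ f)^[n] 0 + c • (Phi φ μ 0)^[n] 1 := by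
  induction n with
  | zero => simpa [Pi.le_def] using hIc
  | succ n ih =>
    rw [Function.iterate_succ_apply', Function.iterate_succ_apply', ← Phi_zero_smul,
      ← Phi_add]
    exact hsub.trans (Phi_mono φ μ f ih)

noncomputable def guardedPathMass (φ : Set S) (μ : S → S → ℝ≥0) (m : ℕ) (a : S) : ℝ≥0∞ :=
  ∑' v : Fin m → S, if ∀ i : Fin m, (Fin.cons a v : Fin (m + 1) → S) i.castSucc ∈ φ then
    (chainP φ μ (List.ofFn (Fin.cons a v : Fin (m + 1) → S)) : ℝ≥0∞) else 0

theorem iterate_Phi_zero_one_eq_guardedPathMass (φ : Set S) (μ : S → S → ℝ≥0) (m : ℕ) :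
    (Phi φ μ 0)^[m] 1 = guardedPathMass φ μ m := by
  induction m with
  | zero =>
    funext a
    simp [guardedPathMass, chainP]
  | succ m ih =>
    funext a
    rw [Function.iterate_succ_apply', ih, guardedPathMass,
      ← (Fin.consEquiv fun _ => S).tsum_eq, ENNReal.tsum_prod']
    by_cases ha : a ∈ φ
    · simp only [Phi, wpF, ha, if_true, guardedPathMass, ← ENNReal.tsum_mul_left]
      refine tsum_congr fun b => tsum_congr fun w => ?_
      simp [Fin.forall_fin_succ, chainP, stepP, ha, mul_ite]
    · simp [Phi, ha, Fin.forall_fin_succ]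

theorem mem_Cyl_ofFn {m : ℕ} (u : Fin m → S) (ϑ : ℕ → S) :
    ϑ ∈ Cyl (List.ofFn u) ↔ ∀ i : Fin m, ϑ i = u i := by
  simp only [Cyl, Set.mem_ofPred_eq, List.get_eq_getElem, List.getElem_ofFn]
  exact ⟨fun h i => h ⟨i, by simp⟩, fun h i => h ⟨i, by simpa using i.2⟩⟩

theorem loopT_lt_top_iff (φ : Set S) (ϑ : ℕ → S) : loopT φ ϑ < ⊤ ↔ ∃ m : ℕ, ϑ m ∉ φ := by
  simp [loopT, sInf_lt_iff]

section Measurability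

variable [MeasurableSpace S] [DiscreteMeasurableSpace S]

theorem measurableSet_Cyl (π : List S) : MeasurableSet (Cyl π) := by
  have h : Cyl π = ⋂ i : Fin π.length, (fun ϑ : ℕ → S => ϑ i) ⁻¹' {π.get i} := by
    ext ϑ
    simp [Cyl]
  rw [h]
  exact MeasurableSet.iInter fun i => measurable_pi_apply _ (MeasurableSet.singleton _)

theorem measurableSet_guard_survival (φ : Set S) (n : ℕ) :
    MeasurableSet {ϑ : ℕ → S | ∀ i < n, ϑ i ∈ φ} := by
  simp_rw [Set.ofPred_forall]
  exact .iInter fun i => .iInter fun _ => measurable_pi_apply i MeasurableSet.of_discrete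

theorem measurableSet_loopT_lt_top (φ : Set S) : MeasurableSet {ϑ : ℕ → S | loopT φ ϑ < ⊤} := by
  simp_rw [loopT_lt_top_iff, Set.ofPred_exists]
  exact .iUnion fun m => measurable_pi_apply m MeasurableSet.of_discrete.compl

theorem guardedPathMass_le_measure [Countable S] (φ : Set S) (μ : S → S → ℝ≥0)
    {ν : Measure (ℕ → S)} {a : S} (hν : ∀ π : List S, π ≠ [] → ν (Cyl π) = prefP φ μ a π) (m : ℕ) :
    guardedPathMass φ μ m a ≤ ν {ϑ | ∀ i < m, ϑ i ∈ φ} := by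
  let G : Set (Fin m → S) := {v | ∀ i : Fin m, (Fin.cons a v : Fin (m + 1) → S) i.castSucc ∈ φ}
  let C (v : Fin m → S) : Set (ℕ → S) := Cyl (List.ofFn (Fin.cons a v : Fin (m + 1) → S))
  have hC (v : Fin m → S) : ν (C v) = chainP φ μ (List.ofFn (Fin.cons a v : Fin (m + 1) → S)) := by
    rw [hν _ (by simp), prefP]
    simp
  have hdisj : Pairwise (Function.onFun Disjoint fun v : G => C v) := by
    refine fun v w hvw => Set.disjoint_left.2 fun ϑ hϑv hϑw => hvw (Subtype.ext ?_)
    refine Fin.cons_right_injective (α := fun _ => S) a (funext fun i => ?_)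
    exact ((mem_Cyl_ofFn _ ϑ).1 hϑv i).symm.trans ((mem_Cyl_ofFn _ ϑ).1 hϑw i)
  calc guardedPathMass φ μ m a = ∑' v : G, ν (C v) := by
        rw [tsum_subtype G fun v => ν (C v)]
        simp only [guardedPathMass, hC, Set.indicator_apply]
        rfl
    _ ≤ ν (⋃ v : G, C v) :=
        tsum_meas_le_meas_iUnion_of_disjoint ν (fun v => measurableSet_Cyl _) hdisj
    _ ≤ ν {ϑ | ∀ i < m, ϑ i ∈ φ} := by
        refine measure_mono (Set.iUnion_subset fun v ϑ hϑ i hi => ?_)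
        simpa [(mem_Cyl_ofFn _ ϑ).1 hϑ ⟨i, by omega⟩] using v.2 ⟨i, hi⟩

theorem tendsto_measure_guard_survival (φ : Set S) {ν : Measure (ℕ → S)} [IsFiniteMeasure ν]
    (hterm : ∀ᵐ ϑ ∂ν, loopT φ ϑ < ⊤) :
    Tendsto (fun n => ν {ϑ | ∀ i < n, ϑ i ∈ φ}) atTop (𝓝 0) := by
  have hanti : Antitone fun n => {ϑ : ℕ → S | ∀ i < n, ϑ i ∈ φ} :=
    fun n n' hn ϑ hϑ i hi => hϑ i (hi.trans_le hn)
  have hinter : ν (⋂ n, {ϑ : ℕ → S | ∀ i < n, ϑ i ∈ φ}) = 0 := by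
    refine measure_eq_zero_iff_ae_notMem.2 (hterm.mono fun ϑ hϑ hmem => ?_)
    obtain ⟨m, hm⟩ := (loopT_lt_top_iff φ ϑ).1 hϑ
    exact hm (Set.mem_iInter.1 hmem (m + 1) m m.lt_succ_self)
  rw [← hinter]
  exact tendsto_measure_iInter_atTop
    (fun n => (measurableSet_guard_survival φ n).nullMeasurableSet) hanti ⟨0, measure_ne_top _ _⟩

end Measurability

theorem ost_wp_case_c_general {S : Type*} [Countable S] [MeasurableSpace S] [DiscreteMeasurableSpace S]
    (φ : Set S) (μ : S → S → ℝ≥0)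
    (P : S → Measure (ℕ → S)) (hP : ∀ s, IsProbabilityMeasure (P s))
    (hPC : ∀ (s : S) (π : List S), π ≠ [] → P s (Cyl π) = (prefP φ μ s π : ℝ≥0∞))
    (f I : S → ℝ≥0∞) (hI : BddExp I) (hsub : I ≤ Phi φ μ f I)
    (hAST : ∀ s, P s {ϑ | loopT φ ϑ < ⊤} = 1) :
    I ≤ lfpPhi φ μ f := by
  obtain ⟨c, hc⟩ := hI
  intro s
  have hterm : ∀ᵐ ϑ ∂P s, loopT φ ϑ < ⊤ :=
    (ae_iff_measure_eq (measurableSet_loopT_lt_top φ).nullMeasurableSet).2 (by simp [hAST s])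
  have hbound (n : ℕ) : I s ≤ lfpPhi φ μ f s + c * P s {ϑ | ∀ i < n, ϑ i ∈ φ} := by
    calc I s ≤ (Phi φ μ f)^[n] 0 s + c * (Phi φ μ 0)^[n] 1 s :=
          le_iterate_Phi_add_smul_iterate_Phi_zero_one φ μ hc hsub n s
      _ ≤ lfpPhi φ μ f s + c * P s {ϑ | ∀ i < n, ϑ i ∈ φ} := by
          rw [iterate_Phi_zero_one_eq_guardedPathMass]
          gcongr
          · exact iterate_Phi_le_lfpPhi φ μ f n s
          · exact guardedPathMass_le_measure φ μ (hPC s) n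
  have hlim : Tendsto (fun n => lfpPhi φ μ f s + c * P s {ϑ | ∀ i < n, ϑ i ∈ φ}) atTop
      (𝓝 (lfpPhi φ μ f s)) := by
    simpa using tendsto_const_nhds.add
      (ENNReal.Tendsto.const_mul (tendsto_measure_guard_survival φ hterm) (.inr ENNReal.coe_ne_top))
  exact ge_of_tendsto' hlim hbound

/-- **Optional Stopping Theorem for weakest preexpectations, case (c).** A bounded
subinvariant `I` w.r.t. a bounded postexpectation `f` is a lower bound on `lfp Φ_f`,
provided the loop is universally almost surely terminating. -/
theorem ost_wp_case_c {S : Type*} [Countable S] [MeasurableSpace S] [DiscreteMeasurableSpace S]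
    (φ : Set S) (μ : S → S → ℝ≥0) (hμ : ∀ s, ∑' s', μ s s' = 1)
    (P : S → Measure (ℕ → S)) (hP : ∀ s, IsProbabilityMeasure (P s))
    (hPC : ∀ (s : S) (π : List S), π ≠ [] → P s (Cyl π) = (prefP φ μ s π : ℝ≥0∞))
    (f I : S → ℝ≥0∞) (hf : BddExp f) (hI : BddExp I) (hsub : I ≤ Phi φ μ f I)
    (hAST : ∀ s, P s {ϑ | loopT φ ϑ < ⊤} = 1) :
    I ≤ lfpPhi φ μ f :=
  ost_wp_case_c_general φ μ P hP hPC f I hI hsub hAST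
end
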